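/- arXiv:2305.03421 — 3 statements merged into one kernel-verified Lean document; each statement's English description precedes it below -/
import Mathlib

section
/- (Bounded martingale convergence/representation theorem.) Let (Ω, F, P) be a probability space, I a directed poset, and (F_i)_{i∈I} a filtration of sub-σ-algebras with σ(⋃_{i∈I} F_i) = F. Let r > 0 and let (X_i)_{i∈I} be a martingale with each X_i F_i-measurable and 0 ≤ X_i ≤ r P-a.e., i.e. E[X_j | F_i] = X_i P-a.e. for all i ≤ j. Then there exists a measurable X : Ω → [0,∞) with 0 ≤ X ≤ r P-a.e. such that E[X | F_i] = X_i P-a.e. for every i ∈ I, and X is unique up to P-a.e. equality. -/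
/-!
View the martingale as a net `fᵢ` in `L²`. The martingale property says that `fᵢ` is the
orthogonal projection of `fⱼ` onto `L²(Fᵢ)` for `i ≤ j`, so `‖fⱼ - fᵢ‖² = ‖fⱼ‖² - ‖fᵢ‖²`. The
squared norms increase and are bounded by `r²`, hence the net is Cauchy and converges to some
`Y ∈ L²`; by continuity of the projection, `E[Y | Fᵢ] = Xᵢ`. The bounds `0 ≤ Y ≤ r` pass to the
limit because order intervals of `L²` are closed. Uniqueness: two solutions have the same
integral over every set of the π-system `⋃ᵢ Fᵢ`, which generates `F`, so their signed measures
with density coincide.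
-/

open MeasureTheory Filter Topology

theorem norm_sub_sq_eq_of_inner_sub_eq_zero {E : Type*} [NormedAddCommGroup E]
    [InnerProductSpace ℝ E] {x y : E} (h : inner ℝ x (y - x) = 0) :
    ‖y - x‖ ^ 2 = ‖y‖ ^ 2 - ‖x‖ ^ 2 := by
  have := norm_add_sq_real x (y - x)
  rw [add_sub_cancel, h] at this
  linarith

theorem cauchySeq_of_inner_sub_eq_zero {E ι : Type*} [NormedAddCommGroup E]
    [InnerProductSpace ℝ E] [Preorder ι] [IsDirected ι (· ≤ ·)] [Nonempty ι] {f : ι → E}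
    (horth : ∀ ⦃i j⦄, i ≤ j → inner ℝ (f i) (f j - f i) = 0)
    (hbdd : BddAbove (Set.range fun i => ‖f i‖)) : CauchySeq f := by
  set N : ι → ℝ := fun i => ‖f i‖ ^ 2
  have hN : ∀ ⦃i j⦄, i ≤ j → ‖f j - f i‖ ^ 2 = N j - N i := fun i j hij =>
    norm_sub_sq_eq_of_inner_sub_eq_zero (horth hij)
  have hNmono : Monotone N := fun i j hij => by linarith [hN hij, sq_nonneg ‖f j - f i‖]
  have hNbdd : BddAbove (Set.range N) := by
    obtain ⟨C, hC⟩ := hbdd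
    exact ⟨C ^ 2, Set.forall_mem_range.2 fun i =>
      pow_le_pow_left₀ (norm_nonneg _) (hC ⟨i, rfl⟩) 2⟩
  have hsmall : ∀ ε > 0, ∃ i₀, ∀ ⦃i j⦄, i₀ ≤ i → i ≤ j → ‖f j - f i‖ < ε := by
    intro ε hε
    obtain ⟨i₀, hi₀⟩ := exists_lt_of_lt_ciSup (sub_lt_self (⨆ i, N i) (pow_pos hε 2))
    refine ⟨i₀, fun i j hi hij => lt_of_pow_lt_pow_left₀ 2 hε.le ?_⟩
    linarith [hN hij, le_ciSup hNbdd j, hNmono hi]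
  refine Metric.cauchy_iff.2 ⟨map_neBot, fun ε hε => ?_⟩
  obtain ⟨i₀, hi₀⟩ := hsmall (ε / 2) (half_pos hε)
  refine ⟨f '' Set.Ici i₀, image_mem_map (mem_atTop i₀), ?_⟩
  rintro _ ⟨j, hj, rfl⟩ _ ⟨k, hk, rfl⟩
  obtain ⟨l, hjl, hkl⟩ := directed_of (· ≤ ·) j k
  calc dist (f j) (f k) ≤ ‖f l - f j‖ + ‖f l - f k‖ := by
        rw [dist_eq_norm, norm_sub_rev (f l) (f j)]
        exact norm_sub_le_norm_sub_add_norm_sub _ _ _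
    _ < ε / 2 + ε / 2 := add_lt_add (hi₀ hj hjl) (hi₀ hk hkl)
    _ = ε := add_halves ε

namespace MeasureTheory

theorem ae_norm_le_of_nonneg_of_le {Ω : Type*} {mΩ : MeasurableSpace Ω} {P : Measure Ω}
    {f : Ω → ℝ} {r : ℝ} (h0 : 0 ≤ᵐ[P] f) (hr : f ≤ᵐ[P] fun _ => r) : ∀ᵐ ω ∂P, ‖f ω‖ ≤ r := by
  filter_upwards [h0, hr] with ω h0 hr
  exact abs_le.2 ⟨by linarith [show (0 : ℝ) ≤ f ω from h0], hr⟩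

theorem Lp.mem_Icc_zero_const_iff {Ω : Type*} {mΩ : MeasurableSpace Ω} {P : Measure Ω}
    [IsFiniteMeasure P] {p : ENNReal} (r : ℝ) (u : Lp ℝ p P) :
    u ∈ Set.Icc 0 ((memLp_const r).toLp fun _ => r) ↔ 0 ≤ᵐ[P] u ∧ u ≤ᵐ[P] fun _ => r := by
  rw [Set.mem_Icc, ← Lp.coeFn_nonneg, ← Lp.coeFn_le]
  exact and_congr_right fun _ => eventuallyLE_congr EventuallyEq.rfl (memLp_const r).coeFn_toLp

theorem ae_eq_of_forall_condExp_ae_eq {Ω I : Type*} {mΩ : MeasurableSpace Ω} {P : Measure Ω}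
    [IsFiniteMeasure P] [Preorder I] [IsDirected I (· ≤ ·)] [Nonempty I] {ℱ : Filtration I mΩ}
    (hgen : ⨆ i, ℱ i = mΩ) {f g : Ω → ℝ} (hf : Integrable f P) (hg : Integrable g P)
    (hfg : ∀ i, P[f | ℱ i] =ᵐ[P] P[g | ℱ i]) : f =ᵐ[P] g := by
  set C : Set (Set Ω) := ⋃ i, {s | MeasurableSet[ℱ i] s}
  have hC : ∀ s ∈ C, P.withDensityᵥ f s = P.withDensityᵥ g s := by
    intro s hs
    obtain ⟨i, hs⟩ := Set.mem_iUnion.1 hs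
    rw [withDensityᵥ_apply hf (ℱ.le i s hs), withDensityᵥ_apply hg (ℱ.le i s hs),
      ← setIntegral_condExp (ℱ.le i) hf hs, ← setIntegral_condExp (ℱ.le i) hg hs]
    exact setIntegral_congr_ae (ℱ.le i s hs) ((hfg i).mono fun ω hω _ => hω)
  refine hf.ae_eq_of_withDensityᵥ_eq hg <| VectorMeasure.ext_of_generateFrom C hC ?_ ?_ ?_
  · exact ((MeasurableSpace.generateFrom_iUnion_measurableSet _).trans hgen).symm
  · exact isPiSystem_iUnion_of_directed_le _
      (fun i => @MeasurableSpace.isPiSystem_measurableSet _ (ℱ i))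
      (Monotone.directed_le fun i j hij s hs => ℱ.mono hij s hs)
  · exact hC _ (Set.mem_iUnion.2 ⟨Classical.arbitrary I, MeasurableSet.univ⟩)

section Martingale

variable {Ω I : Type*} {mΩ : MeasurableSpace Ω} {P : Measure Ω} [IsFiniteMeasure P]
  [Preorder I] {ℱ : Filtration I mΩ} {X : I → Ω → ℝ}

theorem Martingale.condExpL2_toLp_eq (hX : Martingale X ℱ P) (hX2 : ∀ i, MemLp (X i) 2 P)
    {i j : I} (hij : i ≤ j) :
    (condExpL2 ℝ ℝ (ℱ.le i) ((hX2 j).toLp (X j)) : Lp ℝ 2 P) = (hX2 i).toLp (X i) :=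
  Lp.ext <| ((hX2 j).condExpL2_ae_eq_condExp (ℱ.le i)).trans <|
    (hX.condExp_ae_eq hij).trans (hX2 i).coeFn_toLp.symm

theorem Martingale.inner_toLp_sub_eq_zero (hX : Martingale X ℱ P) (hX2 : ∀ i, MemLp (X i) 2 P)
    {i j : I} (hij : i ≤ j) :
    inner ℝ ((hX2 i).toLp (X i)) ((hX2 j).toLp (X j) - (hX2 i).toLp (X i)) = 0 := by
  have hmeas : AEStronglyMeasurable[ℱ i] ((hX2 i).toLp (X i)) P :=
    ⟨X i, hX.stronglyMeasurable i, (hX2 i).coeFn_toLp⟩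
  rw [inner_sub_right, real_inner_comm,
    ← inner_condExpL2_eq_inner_fun (𝕜 := ℝ) (ℱ.le i) _ _ hmeas,
    hX.condExpL2_toLp_eq hX2 hij, sub_self]

theorem Martingale.exists_tendsto_Lp_condExp_eq [IsDirected I (· ≤ ·)] [Nonempty I]
    (hX : Martingale X ℱ P) (hX2 : ∀ i, MemLp (X i) 2 P)
    (hbdd : BddAbove (Set.range fun i => ‖(hX2 i).toLp (X i)‖)) :
    ∃ g : Lp ℝ 2 P, Tendsto (fun i => (hX2 i).toLp (X i)) atTop (𝓝 g) ∧
      ∀ i, P[g | ℱ i] =ᵐ[P] X i := by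
  obtain ⟨g, hg⟩ := cauchySeq_tendsto_of_complete <|
    cauchySeq_of_inner_sub_eq_zero (fun i j hij => hX.inner_toLp_sub_eq_zero hX2 hij) hbdd
  refine ⟨g, hg, fun i => ?_⟩
  set T : Lp ℝ 2 P →L[ℝ] Lp ℝ 2 P :=
    (lpMeas ℝ ℝ (ℱ i) 2 P).subtypeL.comp (condExpL2 ℝ ℝ (ℱ.le i))
  have hTg : T g = (hX2 i).toLp (X i) := by
    refine tendsto_nhds_unique ((T.continuous.tendsto g).comp hg) (tendsto_const_nhds.congr' ?_)
    filter_upwards [eventually_ge_atTop i] with j hij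
    exact (hX.condExpL2_toLp_eq hX2 hij).symm
  have hcond := (Lp.memLp g).condExpL2_ae_eq_condExp (𝕜 := ℝ) (ℱ.le i)
  rw [Lp.toLp_coeFn] at hcond
  change (T g : Ω → ℝ) =ᵐ[P] _ at hcond
  rw [hTg] at hcond
  exact hcond.symm.trans (hX2 i).coeFn_toLp

end Martingale

end MeasureTheory

theorem stmt15_general {Ω I : Type*} [PartialOrder I] [IsDirected I (· ≤ ·)] [Nonempty I]
    {mΩ : MeasurableSpace Ω} (P : Measure Ω) [IsProbabilityMeasure P]
    (F : I → MeasurableSpace Ω) (hmono : Monotone F) (hle : ∀ i, F i ≤ mΩ)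
    (hgen : (⨆ i, F i) = mΩ)
    (r : ℝ) (X : I → Ω → ℝ)
    (hXmeas : ∀ i, Measurable[F i] (X i))
    (hX0 : ∀ i, 0 ≤ᵐ[P] X i) (hXr : ∀ i, X i ≤ᵐ[P] fun _ => r)
    (hmart : ∀ i j, i ≤ j → P[X j | F i] =ᵐ[P] X i) :
    ∃ Y : Ω → ℝ, Measurable Y ∧ 0 ≤ᵐ[P] Y ∧ (Y ≤ᵐ[P] fun _ => r) ∧
      (∀ i, P[Y | F i] =ᵐ[P] X i) ∧
      ∀ Y' : Ω → ℝ, Measurable Y' → 0 ≤ᵐ[P] Y' → (Y' ≤ᵐ[P] fun _ => r) →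
        (∀ i, P[Y' | F i] =ᵐ[P] X i) → Y' =ᵐ[P] Y := by
  let ℱ : Filtration I mΩ := ⟨F, hmono, hle⟩
  have hX : Martingale X ℱ P := ⟨fun i => (hXmeas i).stronglyMeasurable, hmart⟩
  have hX2 : ∀ i, MemLp (X i) 2 P := fun i =>
    .of_bound ((hX.stronglyMeasurable i).mono (hle i)).aestronglyMeasurable r
      (ae_norm_le_of_nonneg_of_le (hX0 i) (hXr i))
  set R : Lp ℝ 2 P := (memLp_const r).toLp fun _ => r
  have hbox : ∀ i, (hX2 i).toLp (X i) ∈ Set.Icc 0 R := fun i =>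
    (Lp.mem_Icc_zero_const_iff r _).2 ⟨EventuallyLE.trans_eq (hX0 i) (hX2 i).coeFn_toLp.symm,
      (hX2 i).coeFn_toLp.trans_le (hXr i)⟩
  have hbdd : BddAbove (Set.range fun i => ‖(hX2 i).toLp (X i)‖) :=
    ⟨‖R‖, Set.forall_mem_range.2 fun i => norm_le_norm_of_abs_le_abs <| by
      rw [abs_of_nonneg (hbox i).1, abs_of_nonneg ((hbox i).1.trans (hbox i).2)]
      exact (hbox i).2⟩
  obtain ⟨g, hlim, hcond⟩ := hX.exists_tendsto_Lp_condExp_eq hX2 hbdd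
  obtain ⟨hg0, hgr⟩ := (Lp.mem_Icc_zero_const_iff r g).1 <|
    isClosed_Icc.mem_of_tendsto hlim (Eventually.of_forall hbox)
  refine ⟨g, (Lp.stronglyMeasurable g).measurable, hg0, hgr, hcond, ?_⟩
  intro Y' hY'meas hY'0 hY'r hY'cond
  have hY'int : Integrable Y' P :=
    .of_bound hY'meas.aestronglyMeasurable r (ae_norm_le_of_nonneg_of_le hY'0 hY'r)
  exact ae_eq_of_forall_condExp_ae_eq (ℱ := ℱ) hgen hY'int ((Lp.memLp g).integrable one_le_two)
    fun i => (hY'cond i).trans (hcond i).symm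

/-- **Bounded martingale convergence/representation theorem.** For a filtration `(F_i)`
over a directed poset generating `F` and a martingale `(X_i)` with each `X_i`
`F_i`-measurable and `0 ≤ X_i ≤ r` a.e., there is a measurable `X : Ω → [0,∞)` with
`0 ≤ X ≤ r` a.e. and `E[X | F_i] = X_i` a.e. for every `i`; moreover `X` is unique up
to `P`-a.e. equality. -/
theorem stmt15 {Ω I : Type*} [PartialOrder I] [IsDirected I (· ≤ ·)] [Nonempty I]
    {mΩ : MeasurableSpace Ω} (P : Measure Ω) [IsProbabilityMeasure P]
    (F : I → MeasurableSpace Ω) (hmono : Monotone F) (hle : ∀ i, F i ≤ mΩ)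
    (hgen : (⨆ i, F i) = mΩ)
    (r : ℝ) (hr : 0 < r) (X : I → Ω → ℝ)
    (hXmeas : ∀ i, Measurable[F i] (X i))
    (hX0 : ∀ i, 0 ≤ᵐ[P] X i) (hXr : ∀ i, X i ≤ᵐ[P] fun _ => r)
    (hmart : ∀ i j, i ≤ j → P[X j | F i] =ᵐ[P] X i) :
    ∃ Y : Ω → ℝ, Measurable Y ∧ 0 ≤ᵐ[P] Y ∧ (Y ≤ᵐ[P] fun _ => r) ∧
      (∀ i, P[Y | F i] =ᵐ[P] X i) ∧
      ∀ Y' : Ω → ℝ, Measurable Y' → 0 ≤ᵐ[P] Y' → (Y' ≤ᵐ[P] fun _ => r) →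
        (∀ i, P[Y' | F i] =ᵐ[P] X i) → Y' =ᵐ[P] Y :=
  stmt15_general P F hmono hle hgen r X hXmeas hX0 hXr hmart
end

section
/- (Kolmogorov extension-type theorem for dominated measures.) Let (Ω, F, P) be a probability space, I a directed poset, and (F_i)_{i∈I} a filtration of sub-σ-algebras with σ(⋃_{i∈I} F_i) = F. Let r > 0 and let (μ_i)_{i∈I} be a family where each μ_i is a measure on the measurable space (Ω, F_i) with μ_i(E) ≤ r·P(E) for all E ∈ F_i, and which is consistent: for i ≤ j, the restriction of μ_j to F_i equals μ_i. Then there exists a unique measure μ on (Ω, F) with μ ≤ rP whose restriction to F_i equals μ_i for every i ∈ I. -/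
open MeasureTheory Filter
open scoped ENNReal NNReal Topology

/-- Auxiliary extension lemma: a consistent, `r·P`-dominated family of measures on a
directed filtration extends to a measure on the generated σ-algebra. -/
lemma stmt16_aux {Ω I : Type*} [PartialOrder I] [IsDirected I (· ≤ ·)] [Nonempty I]
    {mΩ : MeasurableSpace Ω} (P : Measure Ω) [IsFiniteMeasure P]
    (F : I → MeasurableSpace Ω) (hmono : Monotone F) (hle : ∀ i, F i ≤ mΩ)
    (hgen : (⨆ i, F i) = mΩ)
    (r : ℝ≥0)
    (μ : ∀ i, @Measure Ω (F i))
    (hdom : ∀ i, ∀ E : Set Ω, MeasurableSet[F i] E → μ i E ≤ (r : ℝ≥0∞) * P E)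
    (hconsist : ∀ i j, ∀ h : i ≤ j, (μ j).trim (hmono h) = μ i) :
    ∃ ν : Measure Ω, ∀ i, ∀ E : Set Ω, MeasurableSet[F i] E → ν E = μ i E := by
  classical
  set C : Set (Set Ω) := {s | ∃ i, MeasurableSet[F i] s} with hC
  -- the common value
  set m : Set Ω → ℝ≥0∞ := fun s =>
    if h : s ∈ C then μ h.choose s else ∞ with hm
  have m_eq : ∀ (i : I) (s : Set Ω), MeasurableSet[F i] s → m s = μ i s := by
    intro i s hs
    have h : s ∈ C := ⟨i, hs⟩
    have key : ∀ i', MeasurableSet[F i'] s → ∀ j, i' ≤ j → μ i' s = μ j s := by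
      intro i' hs' j hij
      rw [← hconsist i' j hij, trim_measurableSet_eq (hmono hij) hs']
    obtain ⟨k, hk1, hk2⟩ := exists_ge_ge h.choose i
    simp only [hm, dif_pos h]
    rw [key h.choose h.choose_spec k hk1, key i hs k hk2]
  have m_empty : m ∅ = 0 := by
    obtain ⟨i⟩ := ‹Nonempty I›
    rw [m_eq i ∅ (@MeasurableSet.empty Ω (F i))]
    exact measure_empty (μ := μ i)
  set ν₀ := OuterMeasure.ofFunction m m_empty with hν₀
  -- sets in C are Carathéodory-measurable
  have hcar : ∀ s ∈ C, MeasurableSet[ν₀.caratheodory] s := by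
    rintro s ⟨i, hsi⟩
    refine OuterMeasure.ofFunction_caratheodory fun t => ?_
    by_cases ht : t ∈ C
    · obtain ⟨j, hj⟩ := ht
      obtain ⟨k, hik, hjk⟩ := exists_ge_ge i j
      have hsk : MeasurableSet[F k] s := hmono hik _ hsi
      have htk : MeasurableSet[F k] t := hmono hjk _ hj
      rw [m_eq k _ (htk.inter hsk), m_eq k _ (htk.diff hsk), m_eq k t htk]
      exact le_of_eq (measure_inter_add_diff (μ := μ k) t hsk)
    · have : m t = ∞ := dif_neg ht
      rw [this]; exact le_top
  have hca : mΩ ≤ ν₀.caratheodory := by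
    rw [← hgen]
    exact iSup_le fun i s hs => hcar s ⟨i, hs⟩
  refine ⟨ν₀.toMeasure hca, fun i E hE => ?_⟩
  have hEmΩ : MeasurableSet[mΩ] E := hle i E hE
  rw [toMeasure_apply _ _ hEmΩ]
  refine le_antisymm ((OuterMeasure.ofFunction_le E).trans (m_eq i E hE).le) ?_
  -- lower bound: for every countable cover by sets, μ i E ≤ ∑ m
  rw [hν₀, OuterMeasure.ofFunction_apply]
  refine le_iInf₂ fun t ht => ?_
  by_cases hall : ∀ n, t n ∈ C
  · choose g hg using hall
    -- truncated unions
    set U : ℕ → Set Ω := fun N => ⋃ n ∈ Finset.range N, t n with hU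
    have hUm : ∀ N, MeasurableSet[mΩ] (U N) := fun N =>
      Finset.measurableSet_biUnion _ fun n _ => hle (g n) _ (hg n)
    have hPA : Tendsto (fun N => P (E \ U N)) atTop (𝓝 0) := by
      have h1 : Tendsto (fun N => P (E \ U N)) atTop (𝓝 (P (⋂ N, E \ U N))) := by
        refine tendsto_measure_iInter_atTop
          (fun N => ((hEmΩ.diff (hUm N)).nullMeasurableSet)) ?_ ⟨0, measure_ne_top _ _⟩
        intro a b hab
        exact Set.diff_subset_diff_right
          (Set.biUnion_subset_biUnion_left (Finset.range_subset_range.2 hab))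
      have h2 : (⋂ N, E \ U N) = ∅ := by
        rw [← Set.diff_iUnion]
        refine Set.diff_eq_empty.2 (ht.trans ?_)
        intro x hx
        simp only [Set.mem_iUnion] at hx ⊢
        obtain ⟨n, hn⟩ := hx
        exact ⟨n + 1, Set.mem_iUnion.2 ⟨n,
          Set.mem_iUnion.2 ⟨Finset.self_mem_range_succ n, hn⟩⟩⟩
      rwa [h2, measure_empty] at h1
    have key : ∀ N : ℕ, μ i E ≤ (∑' n, m (t n)) + r * P (E \ U N) := by
      intro N
      obtain ⟨j, hj⟩ := Finset.exists_le (insert i ((Finset.range N).image g))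
      have hij : i ≤ j := hj i (Finset.mem_insert_self _ _)
      have hgj : ∀ n ∈ Finset.range N, g n ≤ j := fun n hn =>
        hj (g n) (Finset.mem_insert_of_mem (Finset.mem_image_of_mem g hn))
      have htj : ∀ n ∈ Finset.range N, MeasurableSet[F j] (t n) := fun n hn =>
        hmono (hgj n hn) _ (hg n)
      have hUj : MeasurableSet[F j] (U N) := Finset.measurableSet_biUnion _ htj
      have hEj : MeasurableSet[F j] E := hmono hij _ hE
      have h1 : μ i E = μ j E := by
        rw [← m_eq i E hE, m_eq j E hEj]
      have h2 : μ j E = μ j (E ∩ U N) + μ j (E \ U N) :=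
        (measure_inter_add_diff (μ := μ j) E hUj).symm
      have h3 : μ j (E ∩ U N) ≤ ∑' n, m (t n) := by
        refine le_trans (measure_mono Set.inter_subset_right) ?_
        refine le_trans (measure_biUnion_finset_le _ _) ?_
        have : ∀ n ∈ Finset.range N, μ j (t n) = m (t n) := fun n hn =>
          (m_eq j (t n) (htj n hn)).symm
        rw [Finset.sum_congr rfl this]
        exact ENNReal.sum_le_tsum _
      have h4 : μ j (E \ U N) ≤ r * P (E \ U N) :=
        hdom j _ (hEj.diff hUj)
      calc μ i E = μ j (E ∩ U N) + μ j (E \ U N) := by rw [h1, h2]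
        _ ≤ (∑' n, m (t n)) + r * P (E \ U N) := add_le_add h3 h4
    have hlim : Tendsto (fun N => (∑' n, m (t n)) + r * P (E \ U N)) atTop
        (𝓝 ((∑' n, m (t n)) + r * 0)) := by
      refine Tendsto.add tendsto_const_nhds ?_
      exact ENNReal.Tendsto.const_mul hPA (Or.inr ENNReal.coe_ne_top)
    have := ge_of_tendsto' hlim key
    simpa using this
  · push_neg at hall
    obtain ⟨n, hn⟩ := hall
    have : m (t n) = ∞ := dif_neg hn
    refine le_trans ?_ (ENNReal.le_tsum n)
    rw [this]; exact le_top

/-- **Kolmogorov extension-type theorem for dominated measures.** For a filtration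
`(F_i)` over a directed poset generating `F` and a consistent family `(μ_i)` of measures
on `(Ω, F_i)` with `μ_i ≤ r·P` on `F_i`, there is a unique measure `μ ≤ r·P` on `(Ω,F)`
restricting (trimming) to `μ_i` on each `F_i`. -/
theorem stmt16 {Ω I : Type*} [PartialOrder I] [IsDirected I (· ≤ ·)] [Nonempty I]
    {mΩ : MeasurableSpace Ω} (P : Measure Ω) [IsProbabilityMeasure P]
    (F : I → MeasurableSpace Ω) (hmono : Monotone F) (hle : ∀ i, F i ≤ mΩ)
    (hgen : (⨆ i, F i) = mΩ)
    (r : ℝ≥0) (hr : 0 < r)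
    (μ : ∀ i, @Measure Ω (F i))
    (hdom : ∀ i, ∀ E : Set Ω, MeasurableSet[F i] E → μ i E ≤ (r : ℝ≥0∞) * P E)
    (hconsist : ∀ i j, ∀ h : i ≤ j, (μ j).trim (hmono h) = μ i) :
    ∃! ν : Measure Ω, ν ≤ (r : ℝ≥0∞) • P ∧ ∀ i, ν.trim (hle i) = μ i := by
  classical
  set C : Set (Set Ω) := {s | ∃ i, MeasurableSet[F i] s} with hC
  have hgenC : mΩ = MeasurableSpace.generateFrom C := by
    rw [← hgen, MeasurableSpace.measurableSpace_iSup_eq]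
  have hpi : IsPiSystem C := by
    rintro s ⟨i, hs⟩ u ⟨j, hu⟩ -
    obtain ⟨k, hik, hjk⟩ := exists_ge_ge i j
    exact ⟨k, (hmono hik _ hs).inter (hmono hjk _ hu)⟩
  obtain ⟨ν, hν⟩ := stmt16_aux P F hmono hle hgen r μ hdom hconsist
  -- complementary family
  have hμfin : ∀ i, IsFiniteMeasure (μ i) := fun i =>
    ⟨lt_of_le_of_lt (hdom i Set.univ MeasurableSet.univ)
      (by simp)⟩
  have hμle : ∀ i, μ i ≤ ((r : ℝ≥0∞) • P).trim (hle i) := by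
    intro i
    refine Measure.le_iff.2 fun s hs => ?_
    rw [trim_measurableSet_eq (hle i) hs]
    simpa using hdom i s hs
  set μ' : ∀ i, @Measure Ω (F i) := fun i => ((r : ℝ≥0∞) • P).trim (hle i) - μ i with hμ'
  have hμ'app : ∀ i, ∀ E : Set Ω, MeasurableSet[F i] E →
      μ' i E = (r : ℝ≥0∞) * P E - μ i E := by
    intro i E hE
    haveI := hμfin i
    rw [hμ', Measure.sub_apply hE (hμle i), trim_measurableSet_eq (hle i) hE]
    simp
  have hdom' : ∀ i, ∀ E : Set Ω, MeasurableSet[F i] E → μ' i E ≤ (r : ℝ≥0∞) * P E := by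
    intro i E hE
    rw [hμ'app i E hE]
    exact tsub_le_self
  have hconsist' : ∀ i j, ∀ h : i ≤ j, (μ' j).trim (hmono h) = μ' i := by
    intro i j h
    refine @Measure.ext Ω (F i) _ _ fun s hs => ?_
    rw [trim_measurableSet_eq (hmono h) hs, hμ'app j s (hmono h _ hs),
      hμ'app i s hs, ← hconsist i j h, trim_measurableSet_eq (hmono h) hs]
  obtain ⟨ν', hν'⟩ := stmt16_aux P F hmono hle hgen r μ' hdom' hconsist'
  -- ν + ν' = r • P
  have hνfin : IsFiniteMeasure ν := by
    obtain ⟨i⟩ := ‹Nonempty I›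
    refine ⟨?_⟩
    rw [hν i Set.univ MeasurableSet.univ]
    exact lt_of_le_of_lt (hdom i Set.univ MeasurableSet.univ)
      (by simp)
  have hν'fin : IsFiniteMeasure ν' := by
    obtain ⟨i⟩ := ‹Nonempty I›
    refine ⟨?_⟩
    rw [hν' i Set.univ MeasurableSet.univ]
    exact lt_of_le_of_lt (hdom' i Set.univ MeasurableSet.univ)
      (by simp)
  haveI := hνfin; haveI := hν'fin
  have hunivC : Set.univ ∈ C := by
    obtain ⟨i⟩ := ‹Nonempty I›; exact ⟨i, MeasurableSet.univ⟩
  have honC : ∀ s ∈ C, (ν + ν') s = ((r : ℝ≥0∞) • P) s := by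
    rintro s ⟨i, hs⟩
    have h1 : μ i s ≤ (r : ℝ≥0∞) * P s := hdom i s hs
    have h2 : μ i s ≠ ∞ := by
      haveI := hμfin i; exact measure_ne_top _ _
    simp only [Measure.add_apply, hν i s hs, hν' i s hs, hμ'app i s hs,
      Measure.smul_apply, smul_eq_mul]
    rw [add_tsub_cancel_of_le h1]
  have hsum : ν + ν' = (r : ℝ≥0∞) • P :=
    ext_of_generate_finite C hgenC hpi honC (honC Set.univ hunivC)
  have hνle : ν ≤ (r : ℝ≥0∞) • P := by
    rw [← hsum]; exact Measure.le_add_right le_rfl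
  refine ⟨ν, ⟨hνle, fun i => ?_⟩, ?_⟩
  · refine @Measure.ext Ω (F i) _ _ fun s hs => ?_
    rw [trim_measurableSet_eq (hle i) hs, hν i s hs]
  · rintro ν₂ ⟨hν₂le, hν₂trim⟩
    have hν₂fin : IsFiniteMeasure ν₂ := by
      refine ⟨lt_of_le_of_lt (hν₂le Set.univ) ?_⟩
      simp
    haveI := hν₂fin
    refine ext_of_generate_finite C hgenC hpi ?_ ?_
    · rintro s ⟨i, hs⟩
      have h1 : ν₂ s = μ i s := by
        rw [← hν₂trim i, trim_measurableSet_eq (hle i) hs]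
      rw [h1, ← hν i s hs]
    · obtain ⟨i⟩ := ‹Nonempty I›
      have h1 : ν₂ Set.univ = μ i Set.univ := by
        rw [← hν₂trim i, trim_measurableSet_eq (hle i) MeasurableSet.univ]
      rw [h1, ← hν i Set.univ MeasurableSet.univ]
end

section
/- (Isometry of the martingale correspondence.) Let (Ω, F, P) be a probability space, I a directed poset, and (F_i)_{i∈I} a filtration of sub-σ-algebras with σ(⋃_{i∈I} F_i) = F. Let r > 0 and let X, Y : Ω → [0,∞) be measurable with 0 ≤ X ≤ r and 0 ≤ Y ≤ r P-a.e. Then sup_{i∈I} ∫ |E[X | F_i] − E[Y | F_i]| dP = ∫ |X − Y| dP. -/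
/-!
Conditional expectation is an `L¹` contraction, so every term of the supremum is at most
`∫ |X - Y|`. Conversely, with `Z = X - Y` and `A = {Z ≥ 0}` we have `∫ |Z| = ∫_A Z - ∫_Aᶜ Z`.
The sets measurable for some `F i` form an algebra generating the σ-algebra, so `A` is a limit in
measure of such sets `s`; for `s ∈ F i` the quantity `∫_s Z - ∫_sᶜ Z` is unchanged when `Z` is
replaced by `E[Z | F i]`, hence bounded by `∫ |E[Z | F i]|`, and absolute continuity of the
integral passes to the limit `s → A`.
-/

open MeasureTheory Filter Set Topology
open scoped symmDiff

namespace MeasureTheory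

section SignedSetIntegral

variable {α : Type*} {m : MeasurableSpace α} {μ : Measure α} {f : α → ℝ} {s t : Set α}

lemma setIntegral_sub_setIntegral_compl_le_integral_abs (hf : Integrable f μ)
    (hs : MeasurableSet s) :
    ∫ x in s, f x ∂μ - ∫ x in sᶜ, f x ∂μ ≤ ∫ x, |f x| ∂μ := by
  have h_s : ∫ x in s, f x ∂μ ≤ ∫ x in s, |f x| ∂μ :=
    (le_abs_self _).trans abs_integral_le_integral_abs
  have h_sc : -∫ x in sᶜ, f x ∂μ ≤ ∫ x in sᶜ, |f x| ∂μ :=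
    (neg_le_abs _).trans abs_integral_le_integral_abs
  linarith [integral_add_compl hs hf.abs]

lemma Integrable.exists_setIntegral_sub_setIntegral_compl_eq_integral_abs
    (hf : Integrable f μ) :
    ∃ s, MeasurableSet s ∧ ∫ x in s, f x ∂μ - ∫ x in sᶜ, f x ∂μ = ∫ x, |f x| ∂μ := by
  set g := hf.1.mk f
  have hs : MeasurableSet {x | 0 ≤ g x} :=
    measurableSet_le measurable_const hf.1.stronglyMeasurable_mk.measurable
  refine ⟨_, hs, ?_⟩
  have h_s : ∫ x in {x | 0 ≤ g x}, f x ∂μ = ∫ x in {x | 0 ≤ g x}, |f x| ∂μ := by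
    refine setIntegral_congr_ae hs ?_
    filter_upwards [hf.1.ae_eq_mk] with x hx hxs
    rw [abs_of_nonneg (hx ▸ hxs)]
  have h_sc : -∫ x in {x | 0 ≤ g x}ᶜ, f x ∂μ = ∫ x in {x | 0 ≤ g x}ᶜ, |f x| ∂μ := by
    rw [← integral_neg]
    refine setIntegral_congr_ae hs.compl ?_
    filter_upwards [hf.1.ae_eq_mk] with x hx hxs
    rw [abs_of_neg (hx ▸ not_le.mp hxs)]
  linarith [integral_add_compl hs hf.abs]

lemma abs_setIntegral_sub_setIntegral_le (hf : Integrable f μ) (hs : MeasurableSet s)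
    (ht : MeasurableSet t) :
    |∫ x in s, f x ∂μ - ∫ x in t, f x ∂μ| ≤ ∫ x in s ∆ t, |f x| ∂μ := by
  have h_diff : ∫ x in s, f x ∂μ - ∫ x in t, f x ∂μ
      = ∫ x in s \ t, f x ∂μ - ∫ x in t \ s, f x ∂μ := by
    rw [← integral_inter_add_sdiff ht hf.integrableOn,
      ← integral_inter_add_sdiff hs (hf.integrableOn (s := t)), inter_comm]
    ring
  calc |∫ x in s, f x ∂μ - ∫ x in t, f x ∂μ|
      ≤ |∫ x in s \ t, f x ∂μ| + |∫ x in t \ s, f x ∂μ| := h_diff ▸ abs_sub _ _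
    _ ≤ ∫ x in s \ t, |f x| ∂μ + ∫ x in t \ s, |f x| ∂μ :=
      add_le_add abs_integral_le_integral_abs abs_integral_le_integral_abs
    _ = ∫ x in s ∆ t, |f x| ∂μ :=
      (setIntegral_union disjoint_sdiff_sdiff (ht.diff hs) hf.abs.integrableOn
        hf.abs.integrableOn).symm

lemma tendsto_setIntegral_of_tendsto_measure_symmDiff {ι : Type*} {l : Filter ι}
    {s : ι → Set α} (hf : Integrable f μ) (hs : ∀ i, MeasurableSet (s i))
    (ht : MeasurableSet t) (hst : Tendsto (fun i => μ (s i ∆ t)) l (𝓝 0)) :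
    Tendsto (fun i => ∫ x in s i, f x ∂μ) l (𝓝 (∫ x in t, f x ∂μ)) := by
  rw [tendsto_iff_norm_sub_tendsto_zero]
  refine squeeze_zero (fun _ => norm_nonneg _)
    (fun i => abs_setIntegral_sub_setIntegral_le hf (hs i) ht) ?_
  exact hf.abs.tendsto_setIntegral_nhds_zero hst

end SignedSetIntegral

lemma Measure.MeasureDense.exists_seq_tendsto_measure_symmDiff
    {α : Type*} {m : MeasurableSpace α} {μ : Measure α} {𝒜 : Set (Set α)}
    (h𝒜 : μ.MeasureDense 𝒜) {t : Set α} (ht : MeasurableSet t) (hμt : μ t ≠ ⊤) :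
    ∃ s : ℕ → Set α, (∀ n, s n ∈ 𝒜) ∧ Tendsto (fun n => μ (s n ∆ t)) atTop (𝓝 0) := by
  choose s hs𝒜 hst using fun n : ℕ =>
    h𝒜.approx t ht hμt (1 / (n + 1)) Nat.one_div_pos_of_nat
  have h_bound : Tendsto (fun n : ℕ => ENNReal.ofReal (1 / (n + 1))) atTop (𝓝 0) := by
    simpa using ENNReal.tendsto_ofReal tendsto_one_div_add_atTop_nhds_zero_nat
  refine ⟨s, hs𝒜, tendsto_of_tendsto_of_tendsto_of_le_of_le tendsto_const_nhds h_bound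
    (fun _ => zero_le) fun n => ?_⟩
  simpa only [symmDiff_comm] using (hst n).le

lemma isSetAlgebra_setOf_exists_measurableSet {α ι : Type*} [Nonempty ι]
    {F : ι → MeasurableSpace α} (hF : Directed (· ≤ ·) F) :
    IsSetAlgebra {s : Set α | ∃ i, MeasurableSet[F i] s} where
  empty_mem := ⟨Classical.arbitrary ι, @MeasurableSet.empty _ (F _)⟩
  compl_mem := fun _ ⟨i, hi⟩ => ⟨i, hi.compl⟩
  union_mem := by
    rintro s t ⟨i, hi⟩ ⟨j, hj⟩
    obtain ⟨k, hik, hjk⟩ := hF i j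
    exact ⟨k, (hik _ hi).union (hjk _ hj)⟩


lemma Measure.MeasureDense.integral_abs_le {α : Type*} {m : MeasurableSpace α}
    {μ : Measure α} [IsFiniteMeasure μ] {𝒜 : Set (Set α)} (h𝒜 : μ.MeasureDense 𝒜)
    {f : α → ℝ} (hf : Integrable f μ) {c : ℝ}
    (hc : ∀ s ∈ 𝒜, ∫ x in s, f x ∂μ - ∫ x in sᶜ, f x ∂μ ≤ c) :
    ∫ x, |f x| ∂μ ≤ c := by
  obtain ⟨t, ht, h_abs⟩ := hf.exists_setIntegral_sub_setIntegral_compl_eq_integral_abs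
  obtain ⟨s, hs𝒜, hst⟩ := h𝒜.exists_seq_tendsto_measure_symmDiff ht (measure_ne_top μ t)
  have hs n : MeasurableSet (s n) := h𝒜.measurable _ (hs𝒜 n)
  have h_lim : Tendsto (fun n => ∫ x in s n, f x ∂μ - ∫ x in (s n)ᶜ, f x ∂μ) atTop
      (𝓝 (∫ x in t, f x ∂μ - ∫ x in tᶜ, f x ∂μ)) :=
    (tendsto_setIntegral_of_tendsto_measure_symmDiff hf hs ht hst).sub
      (tendsto_setIntegral_of_tendsto_measure_symmDiff hf (fun n => (hs n).compl) ht.compl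
        (by simpa only [compl_symmDiff_compl] using hst))
  exact h_abs ▸ le_of_tendsto' h_lim fun n => hc _ (hs𝒜 n)

theorem iSup_integral_abs_condExp_eq {α ι : Type*} [Nonempty ι] {m : MeasurableSpace α}
    {μ : Measure α} [IsFiniteMeasure μ] {F : ι → MeasurableSpace α}
    (hF : Directed (· ≤ ·) F) (hle : ∀ i, F i ≤ m) (hgen : ⨆ i, F i = m) {f : α → ℝ}
    (hf : Integrable f μ) :
    ⨆ i, ∫ x, |μ[f | F i] x| ∂μ = ∫ x, |f x| ∂μ := by
  have h_le i : ∫ x, |μ[f | F i] x| ∂μ ≤ ∫ x, |f x| ∂μ := integral_abs_condExp_le f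
  refine le_antisymm (ciSup_le h_le) ?_
  have h𝒜 : μ.MeasureDense {s | ∃ i, MeasurableSet[F i] s} :=
    .of_generateFrom_isSetAlgebra_finite μ (isSetAlgebra_setOf_exists_measurableSet hF)
      (by rw [← hgen, MeasurableSpace.measurableSpace_iSup_eq])
  refine h𝒜.integral_abs_le hf ?_
  rintro s ⟨i, hs⟩
  calc ∫ x in s, f x ∂μ - ∫ x in sᶜ, f x ∂μ
      = ∫ x in s, μ[f | F i] x ∂μ - ∫ x in sᶜ, μ[f | F i] x ∂μ := by
        rw [setIntegral_condExp (hle i) hf hs, setIntegral_condExp (hle i) hf hs.compl]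
    _ ≤ ∫ x, |μ[f | F i] x| ∂μ :=
        setIntegral_sub_setIntegral_compl_le_integral_abs integrable_condExp (hle i _ hs)
    _ ≤ ⨆ i, ∫ x, |μ[f | F i] x| ∂μ := le_ciSup ⟨_, forall_mem_range.2 h_le⟩ i

end MeasureTheory

theorem stmt17_general {Ω I : Type*} [PartialOrder I] [IsDirected I (· ≤ ·)] [Nonempty I]
    {mΩ : MeasurableSpace Ω} (P : Measure Ω) [IsProbabilityMeasure P]
    (F : I → MeasurableSpace Ω) (hmono : Monotone F) (hle : ∀ i, F i ≤ mΩ)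
    (hgen : (⨆ i, F i) = mΩ)
    (r : ℝ) (X Y : Ω → ℝ) (hX : Measurable X) (hY : Measurable Y)
    (hX0 : 0 ≤ᵐ[P] X) (hXr : X ≤ᵐ[P] fun _ => r)
    (hY0 : 0 ≤ᵐ[P] Y) (hYr : Y ≤ᵐ[P] fun _ => r) :
    ⨆ i, ∫ x, |(P[X | F i]) x - (P[Y | F i]) x| ∂P = ∫ x, |X x - Y x| ∂P := by
  have h_int {Z : Ω → ℝ} (hZ : Measurable Z) (hZ0 : 0 ≤ᵐ[P] Z) (hZr : Z ≤ᵐ[P] fun _ => r) :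
      Integrable Z P := by
    refine .of_bound hZ.aestronglyMeasurable r ?_
    filter_upwards [hZ0, hZr] with x h0 hr
    exact abs_le.2 ⟨by linarith [show (0 : ℝ) ≤ Z x from h0], hr⟩
  have hXint := h_int hX hX0 hXr
  have hYint := h_int hY hY0 hYr
  calc ⨆ i, ∫ x, |(P[X | F i]) x - (P[Y | F i]) x| ∂P = ⨆ i, ∫ x, |(P[X - Y | F i]) x| ∂P :=
        iSup_congr fun i => integral_congr_ae <| by
          filter_upwards [condExp_sub hXint hYint (F i)] with x hx
          rw [hx, Pi.sub_apply]
    _ = ∫ x, |X x - Y x| ∂P :=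
        iSup_integral_abs_condExp_eq hmono.directed_le hle hgen (hXint.sub hYint)

/-- **Isometry of the martingale correspondence.** For a filtration `(F_i)` over a
directed poset generating `F`, and measurable `X, Y : Ω → [0,∞)` with `0 ≤ X,Y ≤ r`
a.e., `sup_i ∫ |E[X|F_i] − E[Y|F_i]| dP = ∫ |X − Y| dP`. -/
theorem stmt17 {Ω I : Type*} [PartialOrder I] [IsDirected I (· ≤ ·)] [Nonempty I]
    {mΩ : MeasurableSpace Ω} (P : Measure Ω) [IsProbabilityMeasure P]
    (F : I → MeasurableSpace Ω) (hmono : Monotone F) (hle : ∀ i, F i ≤ mΩ)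
    (hgen : (⨆ i, F i) = mΩ)
    (r : ℝ) (hr : 0 < r) (X Y : Ω → ℝ) (hX : Measurable X) (hY : Measurable Y)
    (hX0 : 0 ≤ᵐ[P] X) (hXr : X ≤ᵐ[P] fun _ => r)
    (hY0 : 0 ≤ᵐ[P] Y) (hYr : Y ≤ᵐ[P] fun _ => r) :
    ⨆ i, ∫ x, |(P[X | F i]) x - (P[Y | F i]) x| ∂P = ∫ x, |X x - Y x| ∂P :=
  stmt17_general P F hmono hle hgen r X Y hX hY hX0 hXr hY0 hYr
end
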